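/- arXiv:1705.06113 — 3 statements merged into one kernel-verified Lean document; each statement's English description precedes it below -/
import Mathlib

section
/- (Markov inequality implies CVaR-style bound via explicit μ) Let Z be an integrable real random variable with Z ≥ −c almost surely for some c > 0, and suppose E[Z + c] ≤ ρ c for ρ ∈ (0,1). Then choosing μ = −c gives μ + ρ^{-1} E[(Z − μ)⁺] = −c + ρ^{-1} E[Z + c] ≤ 0, hence CVaR_ρ(Z) ≤ 0 and Pr(Z ≤ 0) ≥ 1 − ρ. -/
open MeasureTheory

/-!
Since `Z + c ≥ 0` almost surely, `(Z - m)⁺ = Z + c` at `m = -c`, so the CVaR objective at `-c` is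
`-c + ρ⁻¹ E[Z + c] ≤ 0`, which bounds the infimum. Since `{Z > 0} ⊆ {Z + c ≥ c}`, Markov's
inequality for `Z + c` gives `c · Pr(Z > 0) ≤ E[Z + c] ≤ ρ c`.
-/

section

variable {α : Type*} [MeasurableSpace α] {μ : Measure α}

lemma integral_max_sub_zero_of_ae_le {Z : α → ℝ} {m : ℝ} (hm : ∀ᵐ a ∂μ, m ≤ Z a) :
    ∫ a, max (Z a - m) 0 ∂μ = ∫ a, (Z a - m) ∂μ :=
  integral_congr_ae (hm.mono fun _ ha => max_eq_left (sub_nonneg.2 ha))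

lemma mul_measureReal_pos_le_integral_add [IsFiniteMeasure μ] {Z : α → ℝ} {c : ℝ}
    (hint : Integrable Z μ) (hc : 0 ≤ c) (hZ : ∀ᵐ a ∂μ, -c ≤ Z a) :
    c * μ.real {a | 0 < Z a} ≤ ∫ a, (Z a + c) ∂μ := by
  have hnonneg : 0 ≤ᵐ[μ] fun a => Z a + c := hZ.mono fun _ ha => neg_le_iff_add_nonneg.1 ha
  have hsub : {a | 0 < Z a} ⊆ {a | c ≤ Z a + c} := fun a (ha : 0 < Z a) =>
    show c ≤ Z a + c from le_add_of_nonneg_left ha.le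
  calc c * μ.real {a | 0 < Z a} ≤ c * μ.real {a | c ≤ Z a + c} :=
        mul_le_mul_of_nonneg_left (measureReal_mono hsub) hc
    _ ≤ ∫ a, (Z a + c) ∂μ :=
        mul_meas_ge_le_integral_of_nonneg hnonneg (hint.add (integrable_const c)) c

lemma one_sub_le_measureReal_of_measureReal_compl_le [IsProbabilityMeasure μ] {s : Set α}
    {p : ℝ} (h : μ.real sᶜ ≤ p) : 1 - p ≤ μ.real s := by
  have := measureReal_union_le (μ := μ) s sᶜ
  rw [Set.union_compl_self, probReal_univ] at this
  linarith

end

/-- Markov inequality gives the CVaR-style certificate with `μ = −c`: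
if `Z ≥ −c` a.s. and `E[Z + c] ≤ ρc`, then `−c + ρ⁻¹E[(Z+c)⁺] ≤ 0`, hence
`CVaR_ρ(Z) ≤ 0` and `Pr(Z ≤ 0) ≥ 1 − ρ`. -/
theorem stmt8 {α : Type*} [MeasurableSpace α] (μ : Measure α) [IsProbabilityMeasure μ]
    (Z : α → ℝ) (hint : Integrable Z μ) (c ρ : ℝ) (hc : 0 < c)
    (hρ : ρ ∈ Set.Ioo (0 : ℝ) 1)
    (hZ : ∀ᵐ a ∂μ, -c ≤ Z a)
    (hE : ∫ a, (Z a + c) ∂μ ≤ ρ * c) :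
    (-c + ρ⁻¹ * ∫ a, max (Z a - (-c)) 0 ∂μ = -c + ρ⁻¹ * ∫ a, (Z a + c) ∂μ) ∧
    (-c + ρ⁻¹ * ∫ a, max (Z a - (-c)) 0 ∂μ ≤ 0) ∧
    sInf {y : ℝ | ∃ m : ℝ, y = m + ρ⁻¹ * ∫ a, max (Z a - m) 0 ∂μ} ≤ 0 ∧
    1 - ρ ≤ (μ {a | Z a ≤ 0}).toReal := by
  have hρ0 : 0 < ρ := hρ.1
  have hshift : ∫ a, max (Z a - (-c)) 0 ∂μ = ∫ a, (Z a + c) ∂μ := by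
    simpa only [sub_neg_eq_add] using integral_max_sub_zero_of_ae_le hZ
  have hcert : -c + ρ⁻¹ * ∫ a, max (Z a - (-c)) 0 ∂μ ≤ 0 := by
    rw [hshift, neg_add_nonpos_iff, inv_mul_le_iff₀ hρ0]
    exact hE
  have hmarkov : μ.real {a | 0 < Z a} ≤ ρ := by
    have := (mul_measureReal_pos_le_integral_add hint hc.le hZ).trans hE
    rwa [mul_comm ρ, mul_le_mul_iff_right₀ hc] at this
  refine ⟨by rw [hshift], hcert, Real.sInf_nonpos' ⟨_, ⟨-c, rfl⟩, hcert⟩, ?_⟩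
  refine one_sub_le_measureReal_of_measureReal_compl_le ?_
  simpa only [Set.compl_ofPred, not_le] using hmarkov
end

section
/- (Quadratic function epigraph matrix condition) Let g(h) = h^H B h − c for h ∈ ℂ^n with B Hermitian and c ∈ ℝ, and let μ ∈ ℝ. A Hermitian matrix M ∈ ℂ^{(n+1)×(n+1)} satisfies [h^H, 1] M [h; 1] ≥ g(h) − μ for all h ∈ ℂ^n if and only if M ⪰ [[B, 0],[0, −c − μ]]. -/
/-!
Subtracting the block matrix turns the condition into nonnegativity of the Hermitian form of
`N = M - [[B, 0], [0, -c - μ]]` on the vectors `[h; 1]`. Rescaling extends this to every vector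
with nonzero last coordinate, and continuity of the form extends it to all vectors.
-/

open scoped ComplexOrder

open Matrix

namespace Matrix

variable {m o 𝕜 : Type*} [Fintype m] [Fintype o] [RCLike 𝕜]

theorem IsHermitian.posSemidef_iff_re_nonneg {N : Matrix m m 𝕜} (hN : N.IsHermitian) :
    N.PosSemidef ↔ ∀ x, 0 ≤ RCLike.re (star x ⬝ᵥ N *ᵥ x) := by
  simp only [posSemidef_iff_dotProduct_mulVec, RCLike.nonneg_iff (K := 𝕜),
    hN.im_star_dotProduct_mulVec_self, and_true, hN, true_and]

theorem star_sumElim_one_dotProduct_fromBlocks_mulVec {R : Type*} [CommSemiring R] [StarRing R]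
    [Unique o] (A : Matrix m m R) (D : Matrix o o R) (h : m → R) :
    star (Sum.elim h fun _ => 1) ⬝ᵥ fromBlocks A 0 0 D *ᵥ Sum.elim h (fun _ : o => 1) =
      star h ⬝ᵥ A *ᵥ h + D default default := by
  rw [fromBlocks_mulVec, Function.star_sumElim, sumElim_dotProduct_sumElim]
  simp [mulVec, dotProduct]

variable [Unique o] {N : Matrix (m ⊕ o) (m ⊕ o) 𝕜}

theorem re_star_dotProduct_mulVec_nonneg_of_apply_inr_ne_zero
    (hN : ∀ h : m → 𝕜,
      0 ≤ RCLike.re (star (Sum.elim h fun _ => 1) ⬝ᵥ N *ᵥ Sum.elim h fun _ : o => 1))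
    {x : m ⊕ o → 𝕜} (hx : x (.inr default) ≠ 0) : 0 ≤ RCLike.re (star x ⬝ᵥ N *ᵥ x) := by
  set t := x (.inr default)
  have hxt : x = t • Sum.elim (t⁻¹ • (x ∘ .inl)) fun _ : o => 1 := by
    ext (i | i)
    · simp [hx]
    · simp [t, Unique.eq_default i]
  rw [hxt, star_smul, mulVec_smul, smul_dotProduct, dotProduct_smul, smul_smul, smul_eq_mul,
    RCLike.star_def, RCLike.conj_mul, ← RCLike.ofReal_pow, RCLike.re_ofReal_mul]
  exact mul_nonneg (sq_nonneg _) (hN _)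

theorem re_star_dotProduct_mulVec_nonneg_of_forall_sumElim_one
    (hN : ∀ h : m → 𝕜,
      0 ≤ RCLike.re (star (Sum.elim h fun _ => 1) ⬝ᵥ N *ᵥ Sum.elim h fun _ : o => 1))
    (x : m ⊕ o → 𝕜) : 0 ≤ RCLike.re (star x ⬝ᵥ N *ᵥ x) := by
  let e : m ⊕ o → 𝕜 := Sum.elim 0 fun _ => 1
  let f (ε : ℝ) : ℝ := RCLike.re (star (x + ε • e) ⬝ᵥ N *ᵥ (x + ε • e))
  have hf : Continuous f := by fun_prop
  -- `x + ε • e` has last coordinate `x (.inr default) + ε`, which vanishes for at most one `ε`.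
  have hpos : {-RCLike.re (x (.inr default))}ᶜ ⊆ {ε | 0 ≤ f ε} := by
    intro ε hε
    refine re_star_dotProduct_mulVec_nonneg_of_apply_inr_ne_zero hN fun h0 => hε ?_
    have h0_re := congrArg RCLike.re h0
    simp only [Pi.add_apply, Pi.smul_apply, Sum.elim_inr, RCLike.real_smul_eq_coe_mul, mul_one,
      map_add, RCLike.ofReal_re, map_zero, e] at h0_re
    exact eq_neg_of_add_eq_zero_right h0_re
  have h0 : 0 ≤ f 0 := (isClosed_le continuous_const hf).closure_subset_iff.mpr hpos
    ((dense_compl_singleton (-RCLike.re (x (.inr default)))).closure_eq ▸ Set.mem_univ (0 : ℝ))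
  simpa [f] using h0

theorem IsHermitian.posSemidef_iff_forall_re_sumElim_one (hN : N.IsHermitian) :
    N.PosSemidef ↔ ∀ h : m → 𝕜,
      0 ≤ RCLike.re (star (Sum.elim h fun _ => 1) ⬝ᵥ N *ᵥ Sum.elim h fun _ : o => 1) :=
  hN.posSemidef_iff_re_nonneg.trans
    ⟨fun hx _ => hx _, re_star_dotProduct_mulVec_nonneg_of_forall_sumElim_one⟩

end Matrix

/-- Epigraph matrix condition for a quadratic function: a Hermitian `M`
satisfies `[h;1]ᴴ M [h;1] ≥ hᴴBh − c − μ` for all `h` iff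
`M ⪰ [[B,0],[0,−c−μ]]`. -/
theorem stmt9 {n : ℕ} (B : Matrix (Fin n) (Fin n) ℂ) (hB : B.IsHermitian)
    (c μ' : ℝ)
    (M : Matrix (Fin n ⊕ Fin 1) (Fin n ⊕ Fin 1) ℂ) (hM : M.IsHermitian) :
    (∀ h : Fin n → ℂ,
      (star h ⬝ᵥ B.mulVec h).re - c - μ' ≤
        (star (Sum.elim h fun _ => (1 : ℂ)) ⬝ᵥ
          M.mulVec (Sum.elim h fun _ => (1 : ℂ))).re) ↔
    (M - fromBlocks B 0 0 (Matrix.of fun _ _ => ((-c - μ' : ℝ) : ℂ))).PosSemidef := by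
  have hD : (Matrix.of fun _ _ : Fin 1 => ((-c - μ' : ℝ) : ℂ)).IsHermitian := by
    ext
    simp
  rw [(hM.sub (hB.fromBlocks conjTranspose_zero hD)).posSemidef_iff_forall_re_sumElim_one]
  refine forall_congr' fun h => ?_
  rw [sub_mulVec, dotProduct_sub, star_sumElim_one_dotProduct_fromBlocks_mulVec]
  simp only [RCLike.re_to_complex, Complex.sub_re, Complex.add_re, of_apply, Complex.ofReal_re]
  constructor <;> intro <;> linarith
end

section
/- (Feasible-set inclusion of the two robust reformulations) Suppose (Q̂₁, Q̂₂, t̂) satisfies the Markov-approach constraint Tr(B̂₁Γ₁ + B̂₂Γ₂) ≤ (t̂ + β − α) ρ ln 2 with B̂ᵢ = A_e^T ⊗ Q̂ᵢ ⪰ 0 and Γᵢ ⪰ 0, where t̂ + β − α > 0. Then setting M̂ = diag(B̂₁, B̂₂, 0) and μ̂ = −(t̂ + β − α) ln 2, the SDP-approach constraints hold: M̂ ⪰ 0, M̂ ⪰ [[diag(B̂₁,B̂₂), 0],[0, −(t̂+β−α)ln 2 − μ̂]], and μ̂ + ρ^{-1}Tr(Π M̂) ≤ 0, where Π = diag(Ω₁,Ω₂,0)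 + vv^H with v = (h̄₁+φ₁; h̄₂+φ₂; 1) and Γᵢ = Ωᵢ + (h̄ᵢ+φᵢ)(h̄ᵢ+φᵢ)^H. -/
open scoped ComplexOrder

open Matrix Kronecker

/-!
With `M̂ = diag(B̂₁, B̂₂, 0)` and `μ̂ = −(t̂+β−α) ln 2` the first two SDP constraints are immediate:
`M̂` is block diagonal with PSD blocks, and the difference in the second constraint vanishes.
For the third, the zero block of `M̂` kills every term of `Tr(Π M̂)` except the diagonal blocks of
`Π`, which are exactly `Γ₁` and `Γ₂`; hence `Tr(Π M̂) = Tr(B̂₁Γ₁) + Tr(B̂₂Γ₂) ≤ (t̂+β−α) ρ ln 2`.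
-/

namespace Matrix

variable {l m o R : Type*}

theorem PosSemidef.fromBlocks_zero [Fintype l] [Fintype m] [CommRing R] [PartialOrder R]
    [StarRing R] [IsOrderedAddMonoid R] {A : Matrix l l R} {D : Matrix m m R}
    (hA : A.PosSemidef) (hD : D.PosSemidef) : (fromBlocks A 0 0 D).PosSemidef := by
  refine .of_dotProduct_mulVec_nonneg (hA.isHermitian.fromBlocks (by simp) hD.isHermitian)
    fun x => ?_
  rw [← Sum.elim_comp_inl_inr x, fromBlocks_mulVec, Function.star_sumElim,
    sumElim_dotProduct_sumElim]
  simpa using add_nonneg (hA.dotProduct_mulVec_nonneg _) (hD.dotProduct_mulVec_nonneg _)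

theorem vecMulVec_sumElim [Mul R] (a : l → R) (b : m → R) (c : l → R) (d : m → R) :
    vecMulVec (Sum.elim a b) (Sum.elim c d) =
      fromBlocks (vecMulVec a c) (vecMulVec a d) (vecMulVec b c) (vecMulVec b d) := by
  ext (i | i) (j | j) <;> rfl

theorem trace_fromBlocks_mul_fromBlocks_zero [Fintype l] [Fintype m] [NonUnitalNonAssocSemiring R]
    (A : Matrix l l R) (B : Matrix l m R) (C : Matrix m l R) (D : Matrix m m R)
    (A' : Matrix l l R) (D' : Matrix m m R) :
    (fromBlocks A B C D * fromBlocks A' 0 0 D').trace = (A * A').trace + (D * D').trace := by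
  simp [fromBlocks_multiply, trace, Fintype.sum_sum_type]

theorem trace_fromBlocks_add_vecMulVec_mul_fromBlocks [Fintype l] [Fintype m] [Fintype o]
    [CommSemiring R] [StarRing R] (Ω₁ B₁ : Matrix l l R) (Ω₂ B₂ : Matrix m m R)
    (w₁ : l → R) (w₂ : m → R) :
    ((fromBlocks (fromBlocks Ω₁ 0 0 Ω₂) 0 0 (0 : Matrix o o R) +
        vecMulVec (Sum.elim (Sum.elim w₁ w₂) fun _ => 1)
          (star (Sum.elim (Sum.elim w₁ w₂) fun _ => 1))) *
        fromBlocks (fromBlocks B₁ 0 0 B₂) 0 0 0).trace =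
      (B₁ * (Ω₁ + vecMulVec w₁ (star w₁))).trace +
        (B₂ * (Ω₂ + vecMulVec w₂ (star w₂))).trace := by
  simp only [Function.star_sumElim, vecMulVec_sumElim, fromBlocks_add,
    trace_fromBlocks_mul_fromBlocks_zero, Matrix.mul_zero, trace_zero, add_zero]
  rw [trace_mul_comm B₁, trace_mul_comm B₂]

end Matrix

theorem stmt15_general {p m n : ℕ} (Ae : Matrix (Fin p) (Fin p) ℂ) (hAe : Ae.PosSemidef)
    (Q₁ : Matrix (Fin m) (Fin m) ℂ) (Q₂ : Matrix (Fin n) (Fin n) ℂ)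
    (hQ₁ : Q₁.PosSemidef) (hQ₂ : Q₂.PosSemidef)
    (Ω₁ : Matrix (Fin p × Fin m) (Fin p × Fin m) ℂ)
    (Ω₂ : Matrix (Fin p × Fin n) (Fin p × Fin n) ℂ)
    (hb₁ φ₁ : Fin p × Fin m → ℂ) (hb₂ φ₂ : Fin p × Fin n → ℂ)
    (ρ α β t : ℝ) (hρ : ρ ∈ Set.Ioo (0 : ℝ) 1)
    (B₁ : Matrix (Fin p × Fin m) (Fin p × Fin m) ℂ) (hB₁ : B₁ = Aeᵀ ⊗ₖ Q₁)
    (B₂ : Matrix (Fin p × Fin n) (Fin p × Fin n) ℂ) (hB₂ : B₂ = Aeᵀ ⊗ₖ Q₂)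
    (Γ₁ : Matrix (Fin p × Fin m) (Fin p × Fin m) ℂ)
    (hΓ₁ : Γ₁ = Ω₁ + vecMulVec (hb₁ + φ₁) (star (hb₁ + φ₁)))
    (Γ₂ : Matrix (Fin p × Fin n) (Fin p × Fin n) ℂ)
    (hΓ₂ : Γ₂ = Ω₂ + vecMulVec (hb₂ + φ₂) (star (hb₂ + φ₂)))
    (hfeas : (B₁ * Γ₁).trace.re + (B₂ * Γ₂).trace.re ≤ (t + β - α) * ρ * Real.log 2)
    (v : ((Fin p × Fin m) ⊕ (Fin p × Fin n)) ⊕ Fin 1 → ℂ)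
    (hv : v = Sum.elim (Sum.elim (hb₁ + φ₁) (hb₂ + φ₂)) fun _ => 1)
    (Pm : Matrix (((Fin p × Fin m) ⊕ (Fin p × Fin n)) ⊕ Fin 1)
      (((Fin p × Fin m) ⊕ (Fin p × Fin n)) ⊕ Fin 1) ℂ)
    (hPm : Pm = fromBlocks (fromBlocks Ω₁ 0 0 Ω₂) 0 0 0 + vecMulVec v (star v))
    (M : Matrix (((Fin p × Fin m) ⊕ (Fin p × Fin n)) ⊕ Fin 1)
      (((Fin p × Fin m) ⊕ (Fin p × Fin n)) ⊕ Fin 1) ℂ)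
    (hM : M = fromBlocks (fromBlocks B₁ 0 0 B₂) 0 0 0)
    (μ' : ℝ) (hμ : μ' = -((t + β - α) * Real.log 2)) :
    M.PosSemidef ∧
    (M - fromBlocks (fromBlocks B₁ 0 0 B₂) 0 0
      (Matrix.of fun _ _ => ((-((t + β - α) * Real.log 2) - μ' : ℝ) : ℂ))).PosSemidef ∧
    μ' + ρ⁻¹ * (Pm * M).trace.re ≤ 0 := by
  have hB₁psd : B₁.PosSemidef := hB₁ ▸ hAe.transpose.kronecker hQ₁
  have hB₂psd : B₂.PosSemidef := hB₂ ▸ hAe.transpose.kronecker hQ₂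
  refine ⟨hM ▸ (hB₁psd.fromBlocks_zero hB₂psd).fromBlocks_zero .zero, ?_, ?_⟩
  · convert PosSemidef.zero (R := ℂ)
    rw [hM, hμ, sub_self, Complex.ofReal_zero, sub_eq_zero]
    rfl
  · have htrace : (Pm * M).trace.re = (B₁ * Γ₁).trace.re + (B₂ * Γ₂).trace.re := by
      rw [hPm, hv, hM, hΓ₁, hΓ₂, trace_fromBlocks_add_vecMulVec_mul_fromBlocks,
        Complex.add_re]
    have hscaled : ρ⁻¹ * (Pm * M).trace.re ≤ (t + β - α) * Real.log 2 := by
      rw [htrace, inv_mul_le_iff₀ hρ.1]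
      linarith
    linarith

/-- Feasible-set inclusion (Lemma 2): a feasible point of the Markov-approach
constraint yields, via `M̂ = diag(B̂₁,B̂₂,0)` and `μ̂ = −(t̂+β−α)ln 2`, a
feasible point of the SDP-approach constraints. -/
theorem stmt15 {p m n : ℕ} (Ae : Matrix (Fin p) (Fin p) ℂ) (hAe : Ae.PosSemidef)
    (Q₁ : Matrix (Fin m) (Fin m) ℂ) (Q₂ : Matrix (Fin n) (Fin n) ℂ)
    (hQ₁ : Q₁.PosSemidef) (hQ₂ : Q₂.PosSemidef)
    (Ω₁ : Matrix (Fin p × Fin m) (Fin p × Fin m) ℂ) (hΩ₁ : Ω₁.PosSemidef)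
    (Ω₂ : Matrix (Fin p × Fin n) (Fin p × Fin n) ℂ) (hΩ₂ : Ω₂.PosSemidef)
    (hb₁ φ₁ : Fin p × Fin m → ℂ) (hb₂ φ₂ : Fin p × Fin n → ℂ)
    (ρ α β t : ℝ) (hρ : ρ ∈ Set.Ioo (0 : ℝ) 1) (ht : 0 < t + β - α)
    (B₁ : Matrix (Fin p × Fin m) (Fin p × Fin m) ℂ) (hB₁ : B₁ = Aeᵀ ⊗ₖ Q₁)
    (B₂ : Matrix (Fin p × Fin n) (Fin p × Fin n) ℂ) (hB₂ : B₂ = Aeᵀ ⊗ₖ Q₂)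
    (Γ₁ : Matrix (Fin p × Fin m) (Fin p × Fin m) ℂ)
    (hΓ₁ : Γ₁ = Ω₁ + vecMulVec (hb₁ + φ₁) (star (hb₁ + φ₁)))
    (Γ₂ : Matrix (Fin p × Fin n) (Fin p × Fin n) ℂ)
    (hΓ₂ : Γ₂ = Ω₂ + vecMulVec (hb₂ + φ₂) (star (hb₂ + φ₂)))
    (hfeas : (B₁ * Γ₁).trace.re + (B₂ * Γ₂).trace.re ≤ (t + β - α) * ρ * Real.log 2)
    (v : ((Fin p × Fin m) ⊕ (Fin p × Fin n)) ⊕ Fin 1 → ℂ)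
    (hv : v = Sum.elim (Sum.elim (hb₁ + φ₁) (hb₂ + φ₂)) fun _ => 1)
    (Pm : Matrix (((Fin p × Fin m) ⊕ (Fin p × Fin n)) ⊕ Fin 1)
      (((Fin p × Fin m) ⊕ (Fin p × Fin n)) ⊕ Fin 1) ℂ)
    (hPm : Pm = fromBlocks (fromBlocks Ω₁ 0 0 Ω₂) 0 0 0 + vecMulVec v (star v))
    (M : Matrix (((Fin p × Fin m) ⊕ (Fin p × Fin n)) ⊕ Fin 1)
      (((Fin p × Fin m) ⊕ (Fin p × Fin n)) ⊕ Fin 1) ℂ)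
    (hM : M = fromBlocks (fromBlocks B₁ 0 0 B₂) 0 0 0)
    (μ' : ℝ) (hμ : μ' = -((t + β - α) * Real.log 2)) :
    M.PosSemidef ∧
    (M - fromBlocks (fromBlocks B₁ 0 0 B₂) 0 0
      (Matrix.of fun _ _ => ((-((t + β - α) * Real.log 2) - μ' : ℝ) : ℂ))).PosSemidef ∧
    μ' + ρ⁻¹ * (Pm * M).trace.re ≤ 0 :=
  stmt15_general Ae hAe Q₁ Q₂ hQ₁ hQ₂ Ω₁ Ω₂ hb₁ φ₁ hb₂ φ₂ ρ α β t hρ B₁ hB₁ B₂ hB₂ Γ₁ hΓ₁ Γ₂ hΓ₂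
    hfeas v hv Pm hPm M hM μ' hμ
end
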